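/- arXiv:1411.7976 — 5 statements merged into one kernel-verified Lean document; each statement's English description precedes it below -/
import Mathlib

section
/- Assume in addition that p and p' are G-invariant (p(g·m) = p(m) and p'(g·m) = p'(m) for all g ∈ G, m ∈ F). Then for every m ∈ F the phases of S and S' at m commute: γ(m)·γ'(m) = γ'(m)·γ(m). -/
/-- **Lemma 1.i** (Fassò–García-Naranjo–Giacobbe): if `S` and `S'` are two `G`-invariant
commuting vector fields with periodic reduced flows (flows `Φ`, `Φ'`, lifted periods `p`, `p'`,
phases `γ`, `γ'`), and the lifted periods are `G`-invariant, then for every `m` the phases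
`γ m` and `γ' m` commute. -/
theorem phases_commute
    {G F : Type*} [Group G] [MulAction G F]
    -- the action of `G` on `F` is free
    (hfree : ∀ (g : G) (m : F), g • m = m → g = 1)
    -- `Φ` and `Φ'` are actions of `(ℝ, +)` on `F` (the flows of `S` and `S'`)
    (Φ Φ' : ℝ → F → F)
    (hΦ0 : ∀ m, Φ 0 m = m) (hΦ'0 : ∀ m, Φ' 0 m = m)
    (hΦadd : ∀ s t m, Φ (s + t) m = Φ s (Φ t m))
    (hΦ'add : ∀ s t m, Φ' (s + t) m = Φ' s (Φ' t m))
    -- the two flows commute with each other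
    (hcommflows : ∀ t s m, Φ t (Φ' s m) = Φ' s (Φ t m))
    -- each flow commutes with the `G`-action
    (hΦG : ∀ t (g : G) m, Φ t (g • m) = g • Φ t m)
    (hΦ'G : ∀ t (g : G) m, Φ' t (g • m) = g • Φ' t m)
    -- lifted periods `p`, `p'` and phases `γ`, `γ'`
    (p p' : F → ℝ) (γ γ' : F → G)
    (hγ : ∀ m, Φ (p m) m = γ m • m)
    (hγ' : ∀ m, Φ' (p' m) m = γ' m • m)
    -- the lifted periods are `G`-invariant
    (hpinv : ∀ (g : G) (m : F), p (g • m) = p m)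
    (hp'inv : ∀ (g : G) (m : F), p' (g • m) = p' m) :
    ∀ m : F, γ m * γ' m = γ' m * γ m := by
  intro m
  have key : (γ' m * γ m) • m = (γ m * γ' m) • m := by
    calc (γ' m * γ m) • m = γ' m • γ m • m := by rw [mul_smul]
      _ = γ' m • Φ (p m) m := by rw [hγ]
      _ = Φ (p m) (γ' m • m) := by rw [hΦG]
      _ = Φ (p m) (Φ' (p' m) m) := by rw [hγ']
      _ = Φ' (p' m) (Φ (p m) m) := hcommflows _ _ _
      _ = Φ' (p' m) (γ m • m) := by rw [hγ]
      _ = γ m • Φ' (p' m) m := by rw [hΦ'G]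
      _ = γ m • γ' m • m := by rw [hγ']
      _ = (γ m * γ' m) • m := (mul_smul _ _ _).symm
  have h1 : ((γ m * γ' m)⁻¹ * (γ' m * γ m)) • m = m := by
    rw [mul_smul, key, ← mul_smul, inv_mul_cancel, one_smul]
  have := hfree _ _ h1
  have : γ' m * γ m = γ m * γ' m := by
    have := congrArg (fun g => (γ m * γ' m) * g) this
    simpa [mul_assoc] using this
  exact this.symm
end

section
/- Assume in addition that p is invariant along the flow Φ' (p(Φ'_t(m)) = p(m) for all t ∈ ℝ, m ∈ F). Then the phase γ of S is constant along the flow of S': γ(Φ'_t(m)) = γ(m) for all t ∈ ℝ and all m ∈ F. -/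
/-- **Lemma 1.ii** (Fassò–García-Naranjo–Giacobbe): if `S` and `S'` are two `G`-invariant
commuting vector fields with periodic reduced flows (flows `Φ`, `Φ'`, lifted periods `p`, `p'`,
phases `γ`, `γ'`), and the lifted period `p` is invariant along the flow `Φ'`, then the phase
`γ` of `S` is constant along the flow of `S'`. -/
theorem phase_constant_along_commuting_flow
    {G F : Type*} [Group G] [MulAction G F]
    -- the action of `G` on `F` is free
    (hfree : ∀ (g : G) (m : F), g • m = m → g = 1)
    -- `Φ` and `Φ'` are actions of `(ℝ, +)` on `F` (the flows of `S` and `S'`)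
    (Φ Φ' : ℝ → F → F)
    (hΦ0 : ∀ m, Φ 0 m = m) (hΦ'0 : ∀ m, Φ' 0 m = m)
    (hΦadd : ∀ s t m, Φ (s + t) m = Φ s (Φ t m))
    (hΦ'add : ∀ s t m, Φ' (s + t) m = Φ' s (Φ' t m))
    -- the two flows commute with each other
    (hcommflows : ∀ t s m, Φ t (Φ' s m) = Φ' s (Φ t m))
    -- each flow commutes with the `G`-action
    (hΦG : ∀ t (g : G) m, Φ t (g • m) = g • Φ t m)
    (hΦ'G : ∀ t (g : G) m, Φ' t (g • m) = g • Φ' t m)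
    -- lifted periods `p`, `p'` and phases `γ`, `γ'`
    (p p' : F → ℝ) (γ γ' : F → G)
    (hγ : ∀ m, Φ (p m) m = γ m • m)
    (hγ' : ∀ m, Φ' (p' m) m = γ' m • m)
    -- the lifted period `p` is invariant along the flow `Φ'`
    (hpflow : ∀ (t : ℝ) (m : F), p (Φ' t m) = p m) :
    ∀ (t : ℝ) (m : F), γ (Φ' t m) = γ m := by
  intro t m
  have h1 : γ (Φ' t m) • (Φ' t m) = γ m • (Φ' t m) := by
    rw [← hγ (Φ' t m), hpflow, hcommflows, hγ, hΦ'G]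
  have h2 : ((γ m)⁻¹ * γ (Φ' t m)) • (Φ' t m) = Φ' t m := by
    rw [mul_smul, h1, ← mul_smul, inv_mul_cancel, one_smul]
  have h3 := hfree _ _ h2
  have : γ (Φ' t m) = γ m * ((γ m)⁻¹ * γ (Φ' t m)) := by group
  rw [this, h3, mul_one]
end

section
/- The formula J_{(α,g)}(j(β, h)) := j(α + β, g·h) gives a well-defined smooth action J of the group T^k × G on F, and for every ω ∈ ℝ^k the flow t ↦ Φ_{tω} is J-invariant: Φ_{tω}(J_{(α,g)}(m)) = J_{(α,g)}(Φ_{tω}(m)) for all (α, g) ∈ T^k × G, m ∈ F and t ∈ ℝ. -/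
open scoped Manifold
open Function Set Topology

noncomputable section

/-- The standard `n`-torus `Tⁿ = ℝⁿ/ℤⁿ`. -/
abbrev Torus (n : ℕ) : Type := Fin n → AddCircle (1 : ℝ)

/-- The canonical projection `ℝⁿ → Tⁿ`. -/
def toTorus {n : ℕ} (x : Fin n → ℝ) : Torus n := fun i => (x i : AddCircle (1 : ℝ))

/-- A vector in `ℝⁿ` is nonresonant if its components are linearly independent over `ℤ`
(equivalently, over `ℚ`). -/
def Nonresonant {n : ℕ} (ω : Fin n → ℝ) : Prop :=
  ∀ p : Fin n → ℤ, (∑ i, (p i : ℝ) * ω i) = 0 → p = 0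

variable {k : ℕ}
  -- `G` is a compact connected Lie group …
  {EG : Type*} [NormedAddCommGroup EG] [NormedSpace ℝ EG] [FiniteDimensional ℝ EG]
  {HG : Type*} [TopologicalSpace HG] {IG : ModelWithCorners ℝ EG HG}
  {G : Type*} [TopologicalSpace G] [ChartedSpace HG G] [Group G] [IsTopologicalGroup G]
  [LieGroup IG (⊤ : ℕ∞) G] [CompactSpace G] [ConnectedSpace G]
  -- … acting smoothly and freely on a compact smooth manifold `F`
  {EF : Type*} [NormedAddCommGroup EF] [NormedSpace ℝ EF]
  {HF : Type*} [TopologicalSpace HF] {IF : ModelWithCorners ℝ EF HF}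
  {F : Type*} [TopologicalSpace F] [ChartedSpace HF F] [IsManifold IF (⊤ : ℕ∞) F]
  [CompactSpace F] [MulAction G F] [ContinuousSMul G F]

/-! Transporting the translation action of `Tᵏ × G` on itself along the homeomorphism `jhat` gives
`J`, which is then automatically a continuous action satisfying the defining formula. Invariance
reduces to the identity `Φ_x (j (β, h)) = j (x + β, h · E(x))`, valid because the values of `E`
commute: the flow shifts the torus coordinate and multiplies the group coordinate on the right,
whereas `J` shifts the torus coordinate and multiplies on the left. -/

theorem toTorus_add {n : ℕ} (a b : Fin n → ℝ) : toTorus (a + b) = toTorus a + toTorus b :=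
  funext fun _ => rfl

theorem toTorus_surjective {n : ℕ} : Surjective (toTorus (n := n)) :=
  Surjective.piMap fun _ => QuotientAddGroup.mk_surjective

section TransportedAction

variable {A K X : Type*} [TopologicalSpace A] [TopologicalSpace K] [TopologicalSpace X]

def transportedAction [Add A] [Mul K] (e : A × K ≃ₜ X) (a : A) (g : K) (x : X) : X :=
  e (a + (e.symm x).1, g * (e.symm x).2)

theorem transportedAction_apply [Add A] [Mul K] (e : A × K ≃ₜ X) (a b : A) (g h : K) :
    transportedAction e a g (e (b, h)) = e (a + b, g * h) := by
  simp only [transportedAction, Homeomorph.symm_apply_apply]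

theorem transportedAction_zero_one [AddZeroClass A] [MulOneClass K] (e : A × K ≃ₜ X) (x : X) :
    transportedAction e 0 1 x = x := by
  simp [transportedAction]

theorem transportedAction_add_mul [AddSemigroup A] [Semigroup K] (e : A × K ≃ₜ X)
    (a a' : A) (g g' : K) (x : X) :
    transportedAction e (a + a') (g * g') x =
      transportedAction e a g (transportedAction e a' g' x) := by
  simp [transportedAction, add_assoc, mul_assoc]

theorem continuous_transportedAction [Add A] [ContinuousAdd A] [Mul K] [ContinuousMul K]
    (e : A × K ≃ₜ X) :
    Continuous fun p : (A × K) × X => transportedAction e p.1.1 p.1.2 p.2 := by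
  unfold transportedAction
  fun_prop

end TransportedAction

section TwistedOrbitMap

variable {V K X : Type*} [Add V] [Group K] [MulAction K X]

/-- The map `j (α, g) = g • E(α)⁻¹ • Φ_α m₀`. -/
def twistedOrbitMap (Φ : V → X → X) (E : V → K) (m₀ : X) (α : V) (g : K) : X :=
  g • (E α)⁻¹ • Φ α m₀

theorem flow_twistedOrbitMap {Φ : V → X → X} {E : V → K}
    (hΦadd : ∀ x y m, Φ (x + y) m = Φ x (Φ y m))
    (hΦequiv : ∀ x (g : K) m, Φ x (g • m) = g • Φ x m)
    (hEadd : ∀ x y, E (x + y) = E x * E y) (hEcomm : ∀ x y, Commute (E x) (E y))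
    (m₀ : X) (x β : V) (h : K) :
    Φ x (twistedOrbitMap Φ E m₀ β h) = twistedOrbitMap Φ E m₀ (x + β) (h * E x) := by
  have hcancel : E x * (E x * E β)⁻¹ = (E β)⁻¹ := by
    rw [(hEcomm x β).eq, mul_inv_rev, ← mul_assoc, mul_inv_cancel, one_mul]
  simp only [twistedOrbitMap, hΦequiv, hΦadd, hEadd, smul_smul, mul_assoc, hcancel]

end TwistedOrbitMap

theorem flow_transportedAction_comm {K X : Type*} [TopologicalSpace K] [Group K]
    [TopologicalSpace X] [MulAction K X] {Φ : (Fin k → ℝ) → X → X} {E : (Fin k → ℝ) → K}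
    (hΦadd : ∀ x y m, Φ (x + y) m = Φ x (Φ y m))
    (hΦequiv : ∀ x (g : K) m, Φ x (g • m) = g • Φ x m)
    (hEadd : ∀ x y, E (x + y) = E x * E y) (hEcomm : ∀ x y, Commute (E x) (E y))
    {m₀ : X} {e : Torus k × K ≃ₜ X}
    (he : ∀ α g, e (toTorus α, g) = twistedOrbitMap Φ E m₀ α g)
    (x : Fin k → ℝ) (α : Torus k) (g : K) (m : X) :
    Φ x (transportedAction e α g m) = transportedAction e α g (Φ x m) := by
  obtain ⟨a, rfl⟩ := toTorus_surjective α
  obtain ⟨⟨β, h⟩, rfl⟩ := e.surjective m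
  obtain ⟨b, rfl⟩ := toTorus_surjective β
  have hflow := flow_twistedOrbitMap hΦadd hΦequiv hEadd hEcomm m₀
  calc Φ x (transportedAction e (toTorus a) g (e (toTorus b, h)))
      = twistedOrbitMap Φ E m₀ (x + (a + b)) (g * h * E x) := by
        rw [transportedAction_apply, ← toTorus_add, he, hflow]
    _ = transportedAction e (toTorus a) g (e (toTorus (x + b), h * E x)) := by
        rw [transportedAction_apply, ← toTorus_add, he, add_left_comm, mul_assoc]
    _ = transportedAction e (toTorus a) g (Φ x (e (toTorus b, h))) := by
        rw [he, he, hflow]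

theorem torus_times_G_action_and_invariance_general
    -- `Φ` is a smooth action of `(ℝᵏ, +)` on `F` commuting with the `G`-action
    (Φ : (Fin k → ℝ) → F → F)
    (hΦadd : ∀ (x y : Fin k → ℝ) (m : F), Φ (x + y) m = Φ x (Φ y m))
    (hΦequiv : ∀ (x : Fin k → ℝ) (g : G) (m : F), Φ x (g • m) = g • Φ x m)
    -- a fixed point `m̄` and the phases `γ̄ᵢ` of the lifts at `m̄`
    (mbar : F)
    -- `E : ℝᵏ → G` is a smooth homomorphism with image in an abelian subgroup,
    -- with `E eᵢ = γ̄ᵢ`  (`E x` plays the role of `exp (x ★ η)`)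
    (E : (Fin k → ℝ) → G)
    (hEadd : ∀ x y, E (x + y) = E x * E y)
    (hEab : ∃ A : Subgroup G, (∀ x, E x ∈ A) ∧ ∀ a ∈ A, ∀ b ∈ A, a * b = b * a)
    -- the map `j (α, g) = g • E(α)⁻¹ • Φ_α m̄`
    (j : (Fin k → ℝ) → G → F)
    (hj : ∀ (α : Fin k → ℝ) (g : G), j α g = g • (E α)⁻¹ • Φ α mbar)
    -- `j` descends to a diffeomorphism of `Tᵏ × G` onto `F`
    (jhat : (Torus k × G) ≃ₜ F)
    (hjhat : ∀ (α : Fin k → ℝ) (g : G), jhat (toTorus α, g) = j α g)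
    :
    ∃ J : Torus k → G → F → F,
      -- defining formula: well-definedness is part of the claim
      (∀ (α β : Fin k → ℝ) (g h : G), J (toTorus α) g (j β h) = j (α + β) (g * h)) ∧
      -- `J` is an action of the group `Tᵏ × G`
      (∀ m : F, J 0 1 m = m) ∧
      (∀ (α α' : Torus k) (g g' : G) (m : F),
        J (α + α') (g * g') m = J α g (J α' g' m)) ∧
      -- continuity (smoothness) of the action
      (Continuous fun p : (Torus k × G) × F => J p.1.1 p.1.2 p.2) ∧
      -- the flow is `J`-invariant
      ∀ (ω : Fin k → ℝ) (t : ℝ) (α : Torus k) (g : G) (m : F),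
        Φ (t • ω) (J α g m) = J α g (Φ (t • ω) m) := by
  obtain ⟨A, hEA, hAcomm⟩ := hEab
  obtain rfl : j = twistedOrbitMap Φ E mbar := funext₂ hj
  refine ⟨transportedAction jhat, fun α β g h => ?_, transportedAction_zero_one jhat,
    transportedAction_add_mul jhat, continuous_transportedAction jhat, fun ω t => ?_⟩
  · rw [← hjhat β, transportedAction_apply, ← toTorus_add, hjhat]
  · exact flow_transportedAction_comm hΦadd hΦequiv hEadd
      (fun x y => hAcomm _ (hEA x) _ (hEA y)) hjhat (t • ω)

/-- **Remark 2 of Section 3.2**: the formula `J_{(α,g)}(j(β,h)) = j(α+β, g·h)` defines a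
(well-defined, smooth — here rendered: continuous) action `J` of `Tᵏ × G` on `F`, and every
flow `t ↦ Φ_{tω}` is `J`-invariant. -/
theorem torus_times_G_action_and_invariance
    (hk : 1 ≤ k)
    -- the action of `G` on `F` is smooth and free
    (hactsmooth : ContMDiff (IG.prod IF) IF (⊤ : ℕ∞) fun p : G × F => p.1 • p.2)
    (hfree : ∀ (g : G) (m : F), g • m = m → g = 1)
    -- `Φ` is a smooth action of `(ℝᵏ, +)` on `F` commuting with the `G`-action
    (Φ : (Fin k → ℝ) → F → F)
    (hΦsmooth : ContMDiff ((𝓘(ℝ, Fin k → ℝ)).prod IF) IF (⊤ : ℕ∞) fun p : (Fin k → ℝ) × F => Φ p.1 p.2)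
    (hΦzero : ∀ m, Φ 0 m = m)
    (hΦadd : ∀ (x y : Fin k → ℝ) (m : F), Φ (x + y) m = Φ x (Φ y m))
    (hΦequiv : ∀ (x : Fin k → ℝ) (g : G) (m : F), Φ x (g • m) = g • Φ x m)
    -- (a) `Φ x m` is in the `G`-orbit of `m` iff `x ∈ ℤᵏ`
    (hperiod : ∀ (m : F) (x : Fin k → ℝ),
      (∃ g : G, Φ x m = g • m) ↔ ∃ z : Fin k → ℤ, x = fun i => (z i : ℝ))
    -- (b) any two points of `F` are joined by the flow up to the `G`-action
    (htrans : ∀ m m' : F, ∃ (x : Fin k → ℝ) (g : G), Φ x m = g • m')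
    -- a fixed point `m̄` and the phases `γ̄ᵢ` of the lifts at `m̄`
    (mbar : F) (γbar : Fin k → G)
    (hγbar : ∀ i, Φ (Pi.single i 1) mbar = γbar i • mbar)
    -- `E : ℝᵏ → G` is a smooth homomorphism with image in an abelian subgroup,
    -- with `E eᵢ = γ̄ᵢ`  (`E x` plays the role of `exp (x ★ η)`)
    (E : (Fin k → ℝ) → G)
    (hE0 : E 0 = 1)
    (hEadd : ∀ x y, E (x + y) = E x * E y)
    (hEsmooth : ContMDiff (𝓘(ℝ, Fin k → ℝ)) IG (⊤ : ℕ∞) E)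
    (hEab : ∃ A : Subgroup G, (∀ x, E x ∈ A) ∧ ∀ a ∈ A, ∀ b ∈ A, a * b = b * a)
    (hEγ : ∀ i, E (Pi.single i 1) = γbar i)
    -- the map `j (α, g) = g • E(α)⁻¹ • Φ_α m̄`
    (j : (Fin k → ℝ) → G → F)
    (hj : ∀ (α : Fin k → ℝ) (g : G), j α g = g • (E α)⁻¹ • Φ α mbar)
    -- `j` descends to a diffeomorphism of `Tᵏ × G` onto `F`
    (jhat : (Torus k × G) ≃ₜ F)
    (hjhat : ∀ (α : Fin k → ℝ) (g : G), jhat (toTorus α, g) = j α g)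
    :
    ∃ J : Torus k → G → F → F,
      -- defining formula: well-definedness is part of the claim
      (∀ (α β : Fin k → ℝ) (g h : G), J (toTorus α) g (j β h) = j (α + β) (g * h)) ∧
      -- `J` is an action of the group `Tᵏ × G`
      (∀ m : F, J 0 1 m = m) ∧
      (∀ (α α' : Torus k) (g g' : G) (m : F),
        J (α + α') (g * g') m = J α g (J α' g' m)) ∧
      -- continuity (smoothness) of the action
      (Continuous fun p : (Torus k × G) × F => J p.1.1 p.1.2 p.2) ∧
      -- the flow is `J`-invariant
      ∀ (ω : Fin k → ℝ) (t : ℝ) (α : Torus k) (g : G) (m : F),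
        Φ (t • ω) (J α g m) = J α g (Φ (t • ω) m) :=
  torus_times_G_action_and_invariance_general Φ hΦadd hΦequiv mbar E hEadd hEab j hj jhat hjhat
end
end

section
/- Let ω ∈ ℝ^k and ν ∈ ℝ^d both be nonresonant vectors, and let (p̃¹, q̃¹), …, (p̃^l, q̃^l) ∈ ℤ^k × ℤ^d be vectors that are linearly independent over ℤ and satisfy the resonance relations p̃^i · ω + q̃^i · ν = 0 for i = 1, …, l. Then the vectors p̃¹, …, p̃^l ∈ ℤ^k are linearly independent over ℤ, the vectors q̃¹, …, q̃^l ∈ ℤ^d are linearly independent over ℤ, and consequently l ≤ min(k, d). -/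
/-- If `ω ∈ ℝᵏ` and `ν ∈ ℝᵈ` are both nonresonant, and `(p̃¹,q̃¹), …, (p̃ˡ,q̃ˡ) ∈ ℤᵏ × ℤᵈ`
are linearly independent over `ℤ` and are resonances of `(ω, ν)` (i.e. `p̃ⁱ·ω + q̃ⁱ·ν = 0`),
then `p̃¹, …, p̃ˡ` are linearly independent over `ℤ`, `q̃¹, …, q̃ˡ` are linearly independent
over `ℤ`, and consequently `l ≤ min k d`. -/
theorem resonance_basis_projections_independent
    {k d l : ℕ} (ω : Fin k → ℝ) (ν : Fin d → ℝ)
    (hω : Nonresonant ω) (hν : Nonresonant ν)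
    (ptil : Fin l → Fin k → ℤ) (qtil : Fin l → Fin d → ℤ)
    (hind : LinearIndependent ℤ fun i => ((ptil i, qtil i) : (Fin k → ℤ) × (Fin d → ℤ)))
    (hres : ∀ i, (∑ j, (ptil i j : ℝ) * ω j) + (∑ j, (qtil i j : ℝ) * ν j) = 0) :
    LinearIndependent ℤ ptil ∧ LinearIndependent ℤ qtil ∧ l ≤ min k d := by
  -- swap of sums identity
  have swap : ∀ {m : ℕ} (g : Fin l → ℤ) (a : Fin l → Fin m → ℤ) (x : Fin m → ℝ),
      (∑ j, ((∑ i, g i * a i j : ℤ) : ℝ) * x j)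
        = ∑ i, (g i : ℝ) * ∑ j, (a i j : ℝ) * x j := by
    intro m g a x
    push_cast
    simp only [Finset.sum_mul, Finset.mul_sum, mul_assoc]
    exact Finset.sum_comm ..
  have hmain : ∀ g : Fin l → ℤ, (∀ j, ∑ i, g i * ptil i j = 0) →
      (∀ j, ∑ i, g i * qtil i j = 0) := by
    intro g hp
    have h1 : (∑ j, ((∑ i, g i * qtil i j : ℤ) : ℝ) * ν j) = 0 := by
      rw [swap g qtil ν]
      have h2 : ∀ i, (∑ j, (qtil i j : ℝ) * ν j) = -(∑ j, (ptil i j : ℝ) * ω j) := by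
        intro i; linarith [hres i]
      rw [show (∑ i, (g i : ℝ) * ∑ j, (qtil i j : ℝ) * ν j)
          = -(∑ j, ((∑ i, g i * ptil i j : ℤ) : ℝ) * ω j) from ?_]
      · simp [hp]
      · rw [swap g ptil ω, ← Finset.sum_neg_distrib]
        exact Finset.sum_congr rfl fun i _ => by rw [h2 i, mul_neg]
    have := hν (fun j => ∑ i, g i * qtil i j) h1
    intro j; exact congrFun this j
  have hmain' : ∀ g : Fin l → ℤ, (∀ j, ∑ i, g i * qtil i j = 0) →
      (∀ j, ∑ i, g i * ptil i j = 0) := by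
    intro g hq
    have h1 : (∑ j, ((∑ i, g i * ptil i j : ℤ) : ℝ) * ω j) = 0 := by
      rw [swap g ptil ω]
      have h2 : ∀ i, (∑ j, (ptil i j : ℝ) * ω j) = -(∑ j, (qtil i j : ℝ) * ν j) := by
        intro i; linarith [hres i]
      rw [show (∑ i, (g i : ℝ) * ∑ j, (ptil i j : ℝ) * ω j)
          = -(∑ j, ((∑ i, g i * qtil i j : ℤ) : ℝ) * ν j) from ?_]
      · simp [hq]
      · rw [swap g qtil ν, ← Finset.sum_neg_distrib]
        exact Finset.sum_congr rfl fun i _ => by rw [h2 i, mul_neg]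
    have := hω (fun j => ∑ i, g i * ptil i j) h1
    intro j; exact congrFun this j
  have hindg := Fintype.linearIndependent_iff.mp hind
  have hzero : ∀ g : Fin l → ℤ, (∀ j, ∑ i, g i * ptil i j = 0) →
      (∀ j, ∑ i, g i * qtil i j = 0) → ∀ i, g i = 0 := by
    intro g hp hq
    apply hindg
    apply Prod.ext
    · rw [Prod.fst_sum]; simp only [Prod.smul_fst, Prod.fst_zero]
      funext j; simpa [Finset.sum_apply, mul_comm] using hp j
    · rw [Prod.snd_sum]; simp only [Prod.smul_snd, Prod.snd_zero]
      funext j; simpa [Finset.sum_apply, mul_comm] using hq j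
  have hip : LinearIndependent ℤ ptil := by
    rw [Fintype.linearIndependent_iff]
    intro g hg
    have hp : ∀ j, ∑ i, g i * ptil i j = 0 := by
      intro j
      have := congrFun hg j
      simpa [Finset.sum_apply, mul_comm] using this
    exact hzero g hp (hmain g hp)
  have hiq : LinearIndependent ℤ qtil := by
    rw [Fintype.linearIndependent_iff]
    intro g hg
    have hq : ∀ j, ∑ i, g i * qtil i j = 0 := by
      intro j
      have := congrFun hg j
      simpa [Finset.sum_apply, mul_comm] using this
    exact hzero g (hmain' g hq) hq
  refine ⟨hip, hiq, le_min ?_ ?_⟩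
  · have := hip.fintype_card_le_finrank
    simpa using this
  · have := hiq.fintype_card_le_finrank
    simpa using this
end

section
/- For all x, α ∈ ℝ^k and g ∈ G one has Φ_x(j'(α, g)) = j'(α + x/r, g·E'(x/r)). Consequently, if ω ∈ ℝ^k and T₀ denotes the closure in G of the one-parameter subgroup {E'(tω/r) : t ∈ ℝ}, then for every g ∈ G the set P'_{g·m̄} := j'(T^k × gT₀) is invariant under the flow t ↦ Φ_{tω}. -/
open scoped Manifold
open Function Set Topology

noncomputable section

variable {k : ℕ}
  -- `G` is a compact connected Lie group …
  {EG : Type*} [NormedAddCommGroup EG] [NormedSpace ℝ EG] [FiniteDimensional ℝ EG]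
  {HG : Type*} [TopologicalSpace HG] {IG : ModelWithCorners ℝ EG HG}
  {G : Type*} [TopologicalSpace G] [ChartedSpace HG G] [Group G] [IsTopologicalGroup G]
  [LieGroup IG (⊤ : ℕ∞) G] [CompactSpace G] [ConnectedSpace G]
  -- … acting smoothly and freely on a compact smooth manifold `F`
  {EF : Type*} [NormedAddCommGroup EF] [NormedSpace ℝ EF]
  {HF : Type*} [TopologicalSpace HF] {IF : ModelWithCorners ℝ EF HF}
  {F : Type*} [TopologicalSpace F] [ChartedSpace HF F] [IsManifold IF (⊤ : ℕ∞) F]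
  [CompactSpace F] [MulAction G F] [ContinuousSMul G F]

/-!
Because `Φ` commutes with the `G`-action and `E'` is a homomorphism, flowing for time `x` shifts
the `ℝᵏ`-coordinate of `j'` by `x / r` and multiplies its `G`-coordinate on the right by
`E'(x / r)`. For `x = tω` this factor lies in the one-parameter subgroup, and right
multiplication by it preserves that subgroup and hence its closure `T₀`.
-/

/-- The map `j'` of the paper is `flowChart Φ E' r m̄`. -/
def flowChart {𝕜 V G X : Type*} [SMul 𝕜 V] [Group G] [MulAction G X]
    (Φ : V → X → X) (E : V → G) (c : 𝕜) (m : X) (α : V) (g : G) : X :=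
  g • (E α)⁻¹ • Φ (c • α) m

theorem flow_flowChart {𝕜 V G X : Type*} [DivisionSemiring 𝕜] [AddCommMonoid V] [Module 𝕜 V]
    [Group G] [MulAction G X] {Φ : V → X → X} {E : V → G}
    (hΦadd : ∀ x y m, Φ (x + y) m = Φ x (Φ y m))
    (hΦequiv : ∀ x (g : G) m, Φ x (g • m) = g • Φ x m) (hE : ∀ x y, E (x + y) = E x * E y)
    {c : 𝕜} (hc : c ≠ 0) (m : X) (x α : V) (g : G) :
    Φ x (flowChart Φ E c m α g) = flowChart Φ E c m (α + c⁻¹ • x) (g * E (c⁻¹ • x)) := by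
  calc Φ x (flowChart Φ E c m α g) = g • (E α)⁻¹ • Φ (c • α + x) m := by
        rw [flowChart, hΦequiv, hΦequiv, add_comm, hΦadd]
    _ = flowChart Φ E c m (α + c⁻¹ • x) (g * E (c⁻¹ • x)) := by
        rw [flowChart, smul_add, smul_inv_smul₀ hc, hE, mul_inv_rev, mul_smul, mul_smul,
          smul_inv_smul]

theorem mul_mem_closure_range_of_map_add {M G : Type*} [Add M] [Mul G] [TopologicalSpace G]
    [ContinuousMul G] {f : M → G} (hf : ∀ s t, f (s + t) = f s * f t) {x : G}
    (hx : x ∈ closure (range f)) (t : M) : x * f t ∈ closure (range f) := by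
  have hmaps : MapsTo (· * f t) (range f) (range f) := by
    rintro _ ⟨s, rfl⟩
    exact ⟨s + t, hf s t⟩
  exact hmaps.closure (continuous_mul_const _) hx

theorem flow_in_j'_coordinates_and_invariance_general
    -- `Φ` is a smooth action of `(ℝᵏ, +)` on `F` commuting with the `G`-action
    (Φ : (Fin k → ℝ) → F → F)
    (hΦadd : ∀ (x y : Fin k → ℝ) (m : F), Φ (x + y) m = Φ x (Φ y m))
    (hΦequiv : ∀ (x : Fin k → ℝ) (g : G) (m : F), Φ x (g • m) = g • Φ x m)
    -- a fixed point `m̄` and the phases `γ̄ᵢ` of the lifts at `m̄`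
    (mbar : F)
    -- a positive integer `r` and an abelian subgroup `A` of `G` containing the `γ̄ᵢ`
    (r : ℕ) (hr : 0 < r)
    -- `E' : ℝᵏ → G` is a smooth homomorphism with image in `A` and `E' eᵢ = γ̄ᵢʳ`
    (E' : (Fin k → ℝ) → G)
    (hE'add : ∀ x y, E' (x + y) = E' x * E' y)
    -- the map `j' (α, g) = g • E'(α)⁻¹ • Φ_{rα} m̄`
    (j' : (Fin k → ℝ) → G → F)
    (hj' : ∀ (α : Fin k → ℝ) (g : G), j' α g = g • (E' α)⁻¹ • Φ ((r : ℝ) • α) mbar)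
    :
    (∀ (x α : Fin k → ℝ) (g : G),
        Φ x (j' α g) = j' (α + (r : ℝ)⁻¹ • x) (g * E' ((r : ℝ)⁻¹ • x))) ∧
    ∀ (ω : Fin k → ℝ) (T₀ : Set G),
      T₀ = closure {g : G | ∃ t : ℝ, g = E' ((r : ℝ)⁻¹ • t • ω)} →
      ∀ (g : G) (t : ℝ),
        Φ (t • ω) '' {y : F | ∃ (α : Fin k → ℝ) (h : G), h ∈ T₀ ∧ y = j' α (g * h)} ⊆
          {y : F | ∃ (α : Fin k → ℝ) (h : G), h ∈ T₀ ∧ y = j' α (g * h)} := by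
  have hr' : (r : ℝ) ≠ 0 := Nat.cast_ne_zero.2 hr.ne'
  obtain rfl : j' = flowChart Φ E' (r : ℝ) mbar := funext₂ hj'
  have hflow := flow_flowChart hΦadd hΦequiv hE'add hr' mbar
  refine ⟨hflow, ?_⟩
  rintro ω T₀ rfl g t _ ⟨_, ⟨α, h, hh, rfl⟩, rfl⟩
  have hline : ∀ s t : ℝ, E' ((r : ℝ)⁻¹ • (s + t) • ω) =
      E' ((r : ℝ)⁻¹ • s • ω) * E' ((r : ℝ)⁻¹ • t • ω) := fun s t => by
    rw [add_smul, smul_add, hE'add]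
  have hT₀ : {g : G | ∃ t : ℝ, g = E' ((r : ℝ)⁻¹ • t • ω)} =
      range fun t : ℝ => E' ((r : ℝ)⁻¹ • t • ω) :=
    Set.ext fun _ => exists_congr fun _ => eq_comm
  rw [hT₀] at hh ⊢
  exact ⟨α + (r : ℝ)⁻¹ • t • ω, h * E' ((r : ℝ)⁻¹ • t • ω),
    mul_mem_closure_range_of_map_add hline hh t, by rw [hflow, mul_assoc]⟩

/-- **Equation (15)**: `Φ_x(j'(α,g)) = j'(α + x/r, g·E'(x/r))`; consequently, for `ω ∈ ℝᵏ`
and `T₀` the closure of the one-parameter subgroup `{E'(tω/r)}`, each set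
`P'_{g·m̄} = j'(Tᵏ × gT₀)` is invariant under the flow `t ↦ Φ_{tω}`. -/
theorem flow_in_j'_coordinates_and_invariance
    (hk : 1 ≤ k)
    -- the action of `G` on `F` is smooth and free
    (hactsmooth : ContMDiff (IG.prod IF) IF (⊤ : ℕ∞) fun p : G × F => p.1 • p.2)
    (hfree : ∀ (g : G) (m : F), g • m = m → g = 1)
    -- `Φ` is a smooth action of `(ℝᵏ, +)` on `F` commuting with the `G`-action
    (Φ : (Fin k → ℝ) → F → F)
    (hΦsmooth : ContMDiff ((𝓘(ℝ, Fin k → ℝ)).prod IF) IF (⊤ : ℕ∞) fun p : (Fin k → ℝ) × F => Φ p.1 p.2)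
    (hΦzero : ∀ m, Φ 0 m = m)
    (hΦadd : ∀ (x y : Fin k → ℝ) (m : F), Φ (x + y) m = Φ x (Φ y m))
    (hΦequiv : ∀ (x : Fin k → ℝ) (g : G) (m : F), Φ x (g • m) = g • Φ x m)
    -- (a) `Φ x m` is in the `G`-orbit of `m` iff `x ∈ ℤᵏ`
    (hperiod : ∀ (m : F) (x : Fin k → ℝ),
      (∃ g : G, Φ x m = g • m) ↔ ∃ z : Fin k → ℤ, x = fun i => (z i : ℝ))
    -- (b) any two points of `F` are joined by the flow up to the `G`-action
    (htrans : ∀ m m' : F, ∃ (x : Fin k → ℝ) (g : G), Φ x m = g • m')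
    -- a fixed point `m̄` and the phases `γ̄ᵢ` of the lifts at `m̄`
    (mbar : F) (γbar : Fin k → G)
    (hγbar : ∀ i, Φ (Pi.single i 1) mbar = γbar i • mbar)
    -- a positive integer `r` and an abelian subgroup `A` of `G` containing the `γ̄ᵢ`
    (r : ℕ) (hr : 0 < r)
    (A : Subgroup G) (hAab : ∀ a ∈ A, ∀ b ∈ A, a * b = b * a)
    (hγA : ∀ i, γbar i ∈ A)
    -- `E' : ℝᵏ → G` is a smooth homomorphism with image in `A` and `E' eᵢ = γ̄ᵢʳ`
    (E' : (Fin k → ℝ) → G)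
    (hE'0 : E' 0 = 1)
    (hE'add : ∀ x y, E' (x + y) = E' x * E' y)
    (hE'smooth : ContMDiff (𝓘(ℝ, Fin k → ℝ)) IG (⊤ : ℕ∞) E')
    (hE'A : ∀ x, E' x ∈ A)
    (hE'γ : ∀ i, E' (Pi.single i 1) = γbar i ^ r)
    -- the map `j' (α, g) = g • E'(α)⁻¹ • Φ_{rα} m̄`
    (j' : (Fin k → ℝ) → G → F)
    (hj' : ∀ (α : Fin k → ℝ) (g : G), j' α g = g • (E' α)⁻¹ • Φ ((r : ℝ) • α) mbar)
    :
    (∀ (x α : Fin k → ℝ) (g : G),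
        Φ x (j' α g) = j' (α + (r : ℝ)⁻¹ • x) (g * E' ((r : ℝ)⁻¹ • x))) ∧
    ∀ (ω : Fin k → ℝ) (T₀ : Set G),
      T₀ = closure {g : G | ∃ t : ℝ, g = E' ((r : ℝ)⁻¹ • t • ω)} →
      ∀ (g : G) (t : ℝ),
        Φ (t • ω) '' {y : F | ∃ (α : Fin k → ℝ) (h : G), h ∈ T₀ ∧ y = j' α (g * h)} ⊆
          {y : F | ∃ (α : Fin k → ℝ) (h : G), h ∈ T₀ ∧ y = j' α (g * h)} :=
  flow_in_j'_coordinates_and_invariance_general Φ hΦadd hΦequiv mbar r hr E' hE'add j' hj'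
end
end
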